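/- arXiv:1606.07322 — 4 statements merged into one kernel-verified Lean document; each statement's English description precedes it below -/
import Mathlib

section
/- Let f : X → X be a weak contractive map on a compact metric space X. Then for all y, z ∈ X, d(fⁿ(y), fⁿ(z)) → 0 as n → ∞. -/
open Filter Topology

/-- If `f` is weak contractive on a compact metric space, then for all `y, z`,
`dist (fⁿ y) (fⁿ z) → 0` as `n → ∞`. -/
theorem dist_iterate_tendsto_zero_of_weak_contractive {X : Type*} [MetricSpace X]
    [CompactSpace X] (f : X → X) (hf : ∀ x y, x ≠ y → dist (f x) (f y) < dist x y)
    (y z : X) :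
    Tendsto (fun n => dist (f^[n] y) (f^[n] z)) atTop (𝓝 0) := by
  have hle : ∀ x w : X, dist (f x) (f w) ≤ dist x w := by
    intro x w
    rcases eq_or_ne x w with rfl | h
    · simp
    · exact (hf x w h).le
  have hcont : Continuous f := (LipschitzWith.of_dist_le_mul (K := 1) (by
    intro x w; simpa using hle x w)).continuous
  set a : ℕ → ℝ := fun n => dist (f^[n] y) (f^[n] z) with ha
  have hanti : Antitone a := antitone_nat_of_succ_le fun n => by
    simpa [a, Function.iterate_succ_apply'] using hle (f^[n] y) (f^[n] z)
  have hbdd : BddBelow (Set.range a) := ⟨0, by rintro _ ⟨n, rfl⟩; exact dist_nonneg⟩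
  set L := ⨅ n, a n with hL
  have htend : Tendsto a atTop (𝓝 L) := tendsto_atTop_ciInf hanti hbdd
  have hLge : ∀ n, L ≤ a n := fun n => ciInf_le hbdd n
  have hL0 : 0 ≤ L := le_ciInf fun n => dist_nonneg
  rcases eq_or_lt_of_le hL0 with h0 | hpos
  · rw [← h0] at htend; exact htend
  · exfalso
    -- take a convergent subsequence of the pairs
    obtain ⟨p, -, φ, hφ, hlim⟩ :=
      IsCompact.tendsto_subseq (x := fun n => (f^[n] y, f^[n] z))
        (isCompact_univ (X := X × X)) (fun n => Set.mem_univ _)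
    obtain ⟨pq1, pq2⟩ : Tendsto (fun k => f^[φ k] y) atTop (𝓝 p.1) ∧
        Tendsto (fun k => f^[φ k] z) atTop (𝓝 p.2) :=
      ⟨(continuous_fst.tendsto p).comp hlim, (continuous_snd.tendsto p).comp hlim⟩
    have hdist : Tendsto (fun k => a (φ k)) atTop (𝓝 (dist p.1 p.2)) :=
      (Tendsto.dist pq1 pq2)
    have hdist' : Tendsto (fun k => a (φ k)) atTop (𝓝 L) :=
      htend.comp hφ.tendsto_atTop
    have hpq : dist p.1 p.2 = L := tendsto_nhds_unique hdist hdist'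
    have hne : p.1 ≠ p.2 := by
      intro h; rw [h, dist_self] at hpq; exact hpos.ne hpq
    have hfd : Tendsto (fun k => a (φ k + 1)) atTop (𝓝 (dist (f p.1) (f p.2))) := by
      have h1 : Tendsto (fun k => f^[φ k + 1] y) atTop (𝓝 (f p.1)) := by
        simp only [Function.iterate_succ_apply']
        exact (hcont.tendsto p.1).comp pq1
      have h2 : Tendsto (fun k => f^[φ k + 1] z) atTop (𝓝 (f p.2)) := by
        simp only [Function.iterate_succ_apply']
        exact (hcont.tendsto p.2).comp pq2
      exact h1.dist h2
    have hlt : dist (f p.1) (f p.2) < L := hpq ▸ hf p.1 p.2 hne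
    have : L ≤ dist (f p.1) (f p.2) :=
      le_of_tendsto_of_tendsto' tendsto_const_nhds hfd fun k => hLge _
    linarith
end

section
/- Let {f₁, …, f_k} be continuous self-maps of a compact metric space X forming a weakly hyperbolic IFS, i.e. for every sequence ω ∈ {1,…,k}^ℕ, diam(f_{ω₁} ∘ f_{ω₂} ∘ ⋯ ∘ f_{ωₙ}(X)) → 0 as n → ∞. Then for every ω ∈ {1,…,k}^ℕ and x ∈ X the limit Γ(ω) = lim_{n→∞} f_{ω₁} ∘ ⋯ ∘ f_{ωₙ}(x) exists, is independent of x, and the convergence is uniform in ω and x. -/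
open Filter Topology

/-- The composition `f_{ω₁} ∘ ⋯ ∘ f_{ωₙ}` along a word `ω` (0-indexed), with the
latest map applied first (innermost). -/
def wcomp {X : Type*} {k : ℕ} (f : Fin k → X → X) (ω : ℕ → Fin k) : ℕ → X → X
  | 0 => id
  | n + 1 => wcomp f ω n ∘ f (ω n)

/-- For a weakly hyperbolic IFS of continuous maps on a compact metric space, the limit
`Γ(ω) = lim_n f_{ω₁} ∘ ⋯ ∘ f_{ωₙ}(x)` exists, is independent of `x`, and the convergence
is uniform in `ω` and `x`. -/
theorem wcomp_tendsto_uniform {X : Type*} [MetricSpace X] [CompactSpace X] [Nonempty X]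
    {k : ℕ} (f : Fin k → X → X) (hcont : ∀ i, Continuous (f i))
    (hwh : ∀ ω : ℕ → Fin k,
      Tendsto (fun n => Metric.diam (wcomp f ω n '' Set.univ)) atTop (𝓝 0)) :
    ∃ Γ : (ℕ → Fin k) → X, ∀ ε > 0, ∃ N : ℕ, ∀ (ω : ℕ → Fin k) (x : X), ∀ n ≥ N,
      dist (wcomp f ω n x) (Γ ω) < ε := by
  classical
  -- points of a later composition lie in the image of an earlier one
  have hmono : ∀ (ω : ℕ → Fin k) (m n : ℕ), n ≤ m → ∀ x : X,
      wcomp f ω m x ∈ wcomp f ω n '' Set.univ := by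
    intro ω m n hnm
    induction m, hnm using Nat.le_induction with
    | base => exact fun x => Set.mem_image_of_mem _ (Set.mem_univ x)
    | succ m hm ih =>
      intro x
      show wcomp f ω m (f (ω m) x) ∈ _
      exact ih (f (ω m) x)
  -- continuity of the compositions
  have hc : ∀ (ω : ℕ → Fin k) (n : ℕ), Continuous (wcomp f ω n) := by
    intro ω n
    induction n with
    | zero => exact continuous_id
    | succ n ih => exact ih.comp (hcont (ω n))
  have hbdd : ∀ (ω : ℕ → Fin k) (n : ℕ), Bornology.IsBounded (wcomp f ω n '' Set.univ) :=
    fun ω n => (isCompact_univ.image (hc ω n)).isBounded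
  -- local dependence: `wcomp f ω n` depends only on the first `n` coordinates
  have hloc : ∀ (ω ω' : ℕ → Fin k) (n : ℕ), (∀ i < n, ω i = ω' i) →
      wcomp f ω n = wcomp f ω' n := by
    intro ω ω' n
    induction n with
    | zero => intro _; rfl
    | succ n ih =>
      intro h
      show wcomp f ω n ∘ f (ω n) = wcomp f ω' n ∘ f (ω' n)
      rw [ih (fun i hi => h i (Nat.lt_succ_of_lt hi)), h n (Nat.lt_succ_self n)]
  -- key: uniform smallness of diameters
  have key : ∀ ε > (0 : ℝ), ∃ N : ℕ, ∀ (ω : ℕ → Fin k) (n : ℕ), N ≤ n →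
      Metric.diam (wcomp f ω n '' Set.univ) < ε := by
    intro ε hε
    have h1 : ∀ ω : ℕ → Fin k, ∃ N, Metric.diam (wcomp f ω N '' Set.univ) < ε := by
      intro ω
      exact ((hwh ω).eventually (gt_mem_nhds hε)).exists
    choose Nf hNf using h1
    have hopen : ∀ ω : ℕ → Fin k, IsOpen {ω' : ℕ → Fin k | ∀ i < Nf ω, ω' i = ω i} := by
      intro ω
      have : {ω' : ℕ → Fin k | ∀ i < Nf ω, ω' i = ω i}
          = ⋂ i ∈ Finset.range (Nf ω), (fun ω' : ℕ → Fin k => ω' i) ⁻¹' {ω i} := by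
        ext ω'; simp [Finset.mem_range]
      rw [this]
      exact isOpen_biInter_finset fun i _ =>
        (continuous_apply i).isOpen_preimage _ (isOpen_discrete _)
    have hcover : (Set.univ : Set (ℕ → Fin k)) ⊆
        ⋃ ω : ℕ → Fin k, {ω' | ∀ i < Nf ω, ω' i = ω i} := by
      intro ω _
      exact Set.mem_iUnion.2 ⟨ω, fun i _ => rfl⟩
    obtain ⟨t, ht⟩ := isCompact_univ.elim_finite_subcover _ hopen hcover
    refine ⟨t.sup Nf, ?_⟩
    intro ω n hn
    obtain ⟨ω₀, hω₀t, hω₀⟩ := Set.mem_iUnion₂.1 (ht (Set.mem_univ ω))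
    have hNle : Nf ω₀ ≤ n := le_trans (Finset.le_sup hω₀t) hn
    have heq : wcomp f ω (Nf ω₀) = wcomp f ω₀ (Nf ω₀) := hloc _ _ _ hω₀
    have hsub : wcomp f ω n '' Set.univ ⊆ wcomp f ω (Nf ω₀) '' Set.univ := by
      rintro y ⟨x, -, rfl⟩
      exact hmono ω n (Nf ω₀) hNle x
    calc Metric.diam (wcomp f ω n '' Set.univ)
        ≤ Metric.diam (wcomp f ω (Nf ω₀) '' Set.univ) :=
          Metric.diam_mono hsub (hbdd ω (Nf ω₀))
      _ = Metric.diam (wcomp f ω₀ (Nf ω₀) '' Set.univ) := by rw [heq]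
      _ < ε := hNf ω₀
  -- Cauchy sequences and the limit function Γ
  obtain ⟨x₀⟩ := ‹Nonempty X›
  have hcauchy : ∀ ω : ℕ → Fin k, CauchySeq (fun n => wcomp f ω n x₀) := by
    intro ω
    rw [Metric.cauchySeq_iff]
    intro ε hε
    obtain ⟨N, hN⟩ := key ε hε
    refine ⟨N, fun m hm n hn => ?_⟩
    calc dist (wcomp f ω m x₀) (wcomp f ω n x₀)
        ≤ Metric.diam (wcomp f ω N '' Set.univ) :=
          Metric.dist_le_diam_of_mem (hbdd ω N) (hmono ω m N hm x₀) (hmono ω n N hn x₀)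
      _ < ε := hN ω N le_rfl
  have hlim : ∀ ω : ℕ → Fin k, ∃ y, Tendsto (fun n => wcomp f ω n x₀) atTop (𝓝 y) :=
    fun ω => cauchySeq_tendsto_of_complete (hcauchy ω)
  choose Γ hΓ using hlim
  refine ⟨Γ, ?_⟩
  intro ε hε
  obtain ⟨N, hN⟩ := key (ε / 2) (by positivity)
  refine ⟨N, fun ω x n hn => ?_⟩
  have hle : dist (wcomp f ω n x) (Γ ω) ≤ ε / 2 := by
    have htend : Tendsto (fun m => dist (wcomp f ω n x) (wcomp f ω m x₀)) atTop
        (𝓝 (dist (wcomp f ω n x) (Γ ω))) :=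
      tendsto_const_nhds.dist (hΓ ω)
    refine le_of_tendsto htend ?_
    filter_upwards [eventually_ge_atTop n] with m hm
    have h1 : dist (wcomp f ω n x) (wcomp f ω m x₀)
        ≤ Metric.diam (wcomp f ω n '' Set.univ) :=
      Metric.dist_le_diam_of_mem (hbdd ω n)
        (Set.mem_image_of_mem _ (Set.mem_univ x)) (hmono ω m n hm x₀)
    exact h1.trans (hN ω n hn).le
  linarith
end

section
/- Let {f₁, …, f_k} be a weakly hyperbolic IFS on a compact metric space X. Then the coding map Γ : Ω⁺ → X defined by Γ(ω) = lim_{n→∞} f_{ω₁} ∘ ⋯ ∘ f_{ωₙ}(x₀) (for any fixed x₀ ∈ X) is continuous with respect to the product topology on Ω⁺ = {1,…,k}^ℕ. -/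
open Filter Topology

lemma wcomp_congr {X : Type*} {k : ℕ} (f : Fin k → X → X) {ω ω' : ℕ → Fin k} {n : ℕ}
    (h : ∀ i < n, ω' i = ω i) : wcomp f ω' n = wcomp f ω n := by
  induction n with
  | zero => rfl
  | succ n ih =>
    have h1 : wcomp f ω' n = wcomp f ω n := ih fun i hi => h i (Nat.lt_succ_of_lt hi)
    have h2 : ω' n = ω n := h n (Nat.lt_succ_self n)
    simp [wcomp, h1, h2]

lemma wcomp_continuous {X : Type*} [MetricSpace X] {k : ℕ} (f : Fin k → X → X)
    (hcont : ∀ i, Continuous (f i)) (ω : ℕ → Fin k) (n : ℕ) :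
    Continuous (wcomp f ω n) := by
  induction n with
  | zero => exact continuous_id
  | succ n ih => exact ih.comp (hcont (ω n))

lemma wcomp_mem {X : Type*} {k : ℕ} (f : Fin k → X → X) (ω : ℕ → Fin k) {n m : ℕ}
    (h : n ≤ m) (x : X) : wcomp f ω m x ∈ wcomp f ω n '' Set.univ := by
  induction m generalizing x with
  | zero =>
    have : n = 0 := Nat.le_zero.mp h
    subst this; exact ⟨x, Set.mem_univ x, rfl⟩
  | succ m ih =>
    rcases Nat.lt_or_ge n (m + 1) with h' | h'
    · have hm : n ≤ m := Nat.lt_succ_iff.mp h'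
      show wcomp f ω m (f (ω m) x) ∈ _
      exact ih hm (f (ω m) x)
    · have : n = m + 1 := le_antisymm h h'
      subst this; exact ⟨x, Set.mem_univ x, rfl⟩

/-- For a weakly hyperbolic IFS on a compact metric space, the coding map
`Γ(ω) = lim_n f_{ω₁} ∘ ⋯ ∘ f_{ωₙ}(x₀)` is continuous for the product topology on
`{1,…,k}^ℕ`. -/
theorem coding_map_continuous {X : Type*} [MetricSpace X] [CompactSpace X] [Nonempty X]
    {k : ℕ} (f : Fin k → X → X) (hcont : ∀ i, Continuous (f i))
    (hwh : ∀ ω : ℕ → Fin k,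
      Tendsto (fun n => Metric.diam (wcomp f ω n '' Set.univ)) atTop (𝓝 0))
    (x₀ : X) (Γ : (ℕ → Fin k) → X)
    (hΓ : ∀ ω : ℕ → Fin k, Tendsto (fun n => wcomp f ω n x₀) atTop (𝓝 (Γ ω))) :
    Continuous Γ := by
  rw [continuous_iff_continuousAt]
  intro ω
  rw [ContinuousAt, Metric.tendsto_nhds]
  intro ε hε
  -- choose n with diam < ε
  obtain ⟨n, hn⟩ := ((hwh ω).eventually (gt_mem_nhds hε)).exists
  -- Γ of any word agreeing with ω on first n coords lies in S
  have key : ∀ ω' : ℕ → Fin k, (∀ i < n, ω' i = ω i) →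
      Γ ω' ∈ wcomp f ω n '' Set.univ := by
    intro ω' hω'
    have hS : IsClosed (wcomp f ω n '' Set.univ) :=
      (isCompact_univ.image (wcomp_continuous f hcont ω n)).isClosed
    refine hS.mem_of_tendsto (hΓ ω') ?_
    filter_upwards [eventually_ge_atTop n] with m hm
    rw [← wcomp_congr f hω']
    exact wcomp_mem f ω' hm x₀
  have hΓω : Γ ω ∈ wcomp f ω n '' Set.univ := key ω fun _ _ => rfl
  have hbdd : Bornology.IsBounded (wcomp f ω n '' Set.univ) :=
    (isCompact_univ.image (wcomp_continuous f hcont ω n)).isBounded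
  -- the set of ω' agreeing on first n coords is a nhd of ω
  have hone : ∀ i : ℕ, ∀ᶠ ω' : (ℕ → Fin k) in 𝓝 ω, ω' i = ω i := by
    intro i
    have ht : Tendsto (fun ω' : ℕ → Fin k => ω' i) (𝓝 ω) (𝓝 (ω i)) :=
      (continuous_apply i).continuousAt
    exact ht (by simp [nhds_discrete] : {ω i} ∈ 𝓝 (ω i))
  have hnb : ∀ᶠ ω' in 𝓝 ω, ∀ i ∈ Set.Iio n, ω' i = ω i :=
    (eventually_all_finite (Set.finite_Iio n)).mpr fun i _ => hone i
  have hnb' : ∀ᶠ ω' in 𝓝 ω, ∀ i < n, ω' i = ω i := by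
    filter_upwards [hnb] with ω' h i hi using h i hi
  filter_upwards [hnb'] with ω' hω'
  calc dist (Γ ω') (Γ ω) ≤ Metric.diam (wcomp f ω n '' Set.univ) :=
        Metric.dist_le_diam_of_mem hbdd (key ω' hω') hΓω
    _ < ε := hn
end

section
/- Suppose f and g are weak contractive self-maps of a compact metric space X such that the two-generator IFS {f, g} is weakly hyperbolic, and let h₁, …, h_m be further self-maps of X that are uniform contractions (Lipschitz with constant < 1). Then the IFS generated by {f, g, h₁, …, h_m} is weakly hyperbolic: for every ω ∈ {1,…,m+2}^ℕ, diam(f_{ω₁}∘⋯∘f_{ωₙ}(X)) → 0. -/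
open Filter Topology

/-- If `f, g` are weak contractive maps whose two-generator IFS is weakly hyperbolic,
and `h₁, …, h_m` are uniform contractions, then the IFS generated by
`{f, g, h₁, …, h_m}` is weakly hyperbolic. -/
theorem weakly_hyperbolic_of_mixed_family {X : Type*} [MetricSpace X] [CompactSpace X]
    [Nonempty X] {m : ℕ} (f g : X → X)
    (hf : ∀ x y, x ≠ y → dist (f x) (f y) < dist x y)
    (hg : ∀ x y, x ≠ y → dist (g x) (g y) < dist x y)
    (hfg : ∀ ω : ℕ → Fin 2,
      Tendsto (fun n => Metric.diam (wcomp ![f, g] ω n '' Set.univ)) atTop (𝓝 0))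
    (h : Fin m → X → X)
    (hh : ∀ i, ∃ L : NNReal, L < 1 ∧ LipschitzWith L (h i))
    (F : Fin (m + 2) → X → X)
    (hF0 : F 0 = f) (hF1 : F 1 = g)
    (hFi : ∀ i : Fin m, F ⟨i.1 + 2, by omega⟩ = h i) :
    ∀ ω : ℕ → Fin (m + 2),
      Tendsto (fun n => Metric.diam (wcomp F ω n '' Set.univ)) atTop (𝓝 0) := by
  intro ω
  have hbdd : ∀ s : Set X, Bornology.IsBounded s := fun s =>
    isCompact_univ.isBounded.subset (Set.subset_univ s)
  -- Lipschitz facts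
  have hfL : LipschitzWith 1 f := LipschitzWith.of_dist_le_mul fun x y => by
    rcases eq_or_ne x y with rfl | hne
    · simp
    · simpa using (hf x y hne).le
  have hgL : LipschitzWith 1 g := LipschitzWith.of_dist_le_mul fun x y => by
    rcases eq_or_ne x y with rfl | hne
    · simp
    · simpa using (hg x y hne).le
  set L : NNReal := Finset.univ.sup (fun i => (hh i).choose) with hLdef
  have hL1 : L < 1 := Finset.sup_lt_iff (by norm_num) |>.2 fun i _ => (hh i).choose_spec.1
  have hhL : ∀ i, LipschitzWith L (h i) := fun i =>
    ((hh i).choose_spec.2).weaken (Finset.le_sup (f := fun i => (hh i).choose) (Finset.mem_univ i))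
  have hFbig : ∀ i : Fin (m + 2), 2 ≤ i.1 → LipschitzWith L (F i) := by
    intro i hi
    have h2 : i.1 - 2 < m := by omega
    have := hFi ⟨i.1 - 2, h2⟩
    have hie : (⟨(i.1 - 2) + 2, by omega⟩ : Fin (m + 2)) = i := Fin.ext (by simp; omega)
    rw [hie] at this
    rw [this]
    exact hhL _
  have hFsmall : ∀ i : Fin (m + 2), i.1 < 2 → LipschitzWith 1 (F i) := by
    intro i hi
    interval_cases hiv : i.1
    · have : i = 0 := Fin.ext (by simp [hiv])
      rw [this, hF0]; exact hfL
    · have : i = 1 := Fin.ext (by simp [hiv])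
      rw [this, hF1]; exact hgL
  have hF1lip : ∀ i : Fin (m + 2), LipschitzWith 1 (F i) := by
    intro i
    rcases lt_or_ge i.1 2 with hi | hi
    · exact hFsmall i hi
    · exact (hFbig i hi).weaken hL1.le
  have hW1 : ∀ n, LipschitzWith 1 (wcomp F ω n) := by
    intro n
    induction n with
    | zero => exact LipschitzWith.id
    | succ n ih =>
      have := ih.comp (hF1lip (ω n))
      simpa [wcomp] using this
  by_cases hcase : ∀ N, ∃ n, N ≤ n ∧ 2 ≤ (ω n).1
  · -- uniform contractions occur infinitely often
    set c : ℕ → ℕ := fun n => ((Finset.range n).filter (fun k => 2 ≤ (ω k).1)).card with hc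
    have hkey : ∀ n, LipschitzWith (L ^ c n) (wcomp F ω n) := by
      intro n
      induction n with
      | zero => simpa [wcomp, hc] using (LipschitzWith.id : LipschitzWith 1 (id : X → X))
      | succ n ih =>
        by_cases h2 : 2 ≤ (ω n).1
        · have hcs : c (n + 1) = c n + 1 := by
            have hnot : n ∉ (Finset.range n).filter (fun k => 2 ≤ (ω k).1) := by simp
            simp [hc, Finset.range_add_one, Finset.filter_insert, h2,
              Finset.card_insert_of_notMem hnot]
          have := ih.comp (hFbig (ω n) h2)
          rw [hcs, pow_succ]
          simpa [wcomp] using this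
        · have hcs : c (n + 1) = c n := by
            simp [hc, Finset.range_add_one, Finset.filter_insert, h2]
          have := ih.comp (hFsmall (ω n) (by omega))
          rw [hcs]
          simpa [wcomp] using this
    have hcmono : Monotone c := fun a b hab =>
      Finset.card_le_card (Finset.filter_subset_filter _ (by simpa using Finset.range_subset_range.2 hab))
    have hcunbdd : ∀ b : ℕ, ∃ n, b ≤ c n := by
      intro b
      induction b with
      | zero => exact ⟨0, Nat.zero_le _⟩
      | succ b ih =>
        obtain ⟨n, hn⟩ := ih
        obtain ⟨k, hk, hk2⟩ := hcase n
        refine ⟨k + 1, ?_⟩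
        have : c (k + 1) = c k + 1 := by
          have hnot : k ∉ (Finset.range k).filter (fun j => 2 ≤ (ω j).1) := by simp
          simp [hc, Finset.range_add_one, Finset.filter_insert, hk2,
            Finset.card_insert_of_notMem hnot]
        have := hn.trans (hcmono hk)
        omega
    have hctop : Tendsto c atTop atTop :=
      tendsto_atTop_atTop_of_monotone hcmono (fun b => (hcunbdd b).imp fun _ hx => hx)
    have hpow : Tendsto (fun n => ((L : ℝ)) ^ c n) atTop (𝓝 0) :=
      (tendsto_pow_atTop_nhds_zero_of_lt_one L.coe_nonneg (by exact_mod_cast hL1)).comp hctop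
    have hb : ∀ n, Metric.diam (wcomp F ω n '' Set.univ) ≤
        (L : ℝ) ^ c n * Metric.diam (Set.univ : Set X) := by
      intro n
      have := (hkey n).diam_image_le Set.univ (hbdd _)
      simpa [NNReal.coe_pow] using this
    have hrhs : Tendsto (fun n => (L : ℝ) ^ c n * Metric.diam (Set.univ : Set X))
        atTop (𝓝 0) := by
      simpa using hpow.mul_const (Metric.diam (Set.univ : Set X))
    exact squeeze_zero (fun n => Metric.diam_nonneg) hb hrhs
  · -- eventually only f, g occur
    push_neg at hcase
    obtain ⟨N, hN⟩ := hcase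
    have hN' : ∀ k : ℕ, (ω (N + k)).1 < 2 := fun k => hN _ (Nat.le_add_right N k)
    set ω' : ℕ → Fin 2 := fun k => ⟨(ω (N + k)).1, hN' k⟩ with hω'
    have hFV : ∀ k, F (ω (N + k)) = ![f, g] (ω' k) := by
      intro k
      have hv := hN' k
      have : (ω (N + k)).1 = 0 ∨ (ω (N + k)).1 = 1 := by omega
      rcases this with hv0 | hv1
      · have h1 : ω (N + k) = 0 := Fin.ext (by simp [hv0])
        have h2 : ω' k = 0 := Fin.ext (by simp [hω', hv0])
        rw [h1, h2, hF0]; simp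
      · have h1 : ω (N + k) = 1 := Fin.ext (by simp [hv1])
        have h2 : ω' k = 1 := Fin.ext (by simp [hω', hv1])
        rw [h1, h2, hF1]; simp
    have hcomp : ∀ n, wcomp F ω (N + n) = wcomp F ω N ∘ wcomp ![f, g] ω' n := by
      intro n
      induction n with
      | zero => simp [wcomp]
      | succ n ih =>
        show wcomp F ω ((N + n) + 1) = _
        simp only [wcomp, ih, hFV n]
        rfl
    have hshift : Tendsto (fun n => Metric.diam (wcomp F ω (N + n) '' Set.univ))
        atTop (𝓝 0) := by
      have hb : ∀ n, Metric.diam (wcomp F ω (N + n) '' Set.univ) ≤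
          Metric.diam (wcomp ![f, g] ω' n '' Set.univ) := by
        intro n
        rw [hcomp n, Set.image_comp]
        have := (hW1 N).diam_image_le (wcomp ![f, g] ω' n '' Set.univ) (hbdd _)
        simpa using this
      exact squeeze_zero (fun n => Metric.diam_nonneg) hb (hfg ω')
    have : Tendsto (fun n => Metric.diam (wcomp F ω (n + N) '' Set.univ)) atTop (𝓝 0) := by
      simpa [Nat.add_comm] using hshift
    exact (tendsto_add_atTop_iff_nat N).1 this
end
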